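/- Let L be the covector set of an oriented matroid without loops on a finite set E such that the all-positive sign vector R (R_e = + for all e ∈ E) is a tope of L. Let S⁺,S⁻ ⊆ E be disjoint with S⁺ ∪ S⁻ ≠ ∅ and S⁺ ∪ S⁻ ≠ E, and let f ∈ E ∖ (S⁺ ∪ S⁻). Then for every tope T of L, the restriction T|_{E∖{f}} is a tope of the deletion L∖f, and the map π^f : T(S⁺,S⁻) → T^f(S⁺,S⁻), T ↦ T|_{E∖{f}}, is well defined. Moreover, for every Q ∈ T^f(S⁺,S⁻), the preimage {T ∈ T(S⁺,S⁻) : π^f(T) ⪯_{R|_{E∖{f}}} Q} equals the supertope T(Q⁺, S⁻) of L, where Q⁺ := {g ∈ E∖{f} : Q_g = +}. -/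

import Mathlib

open Finset

/-- Sign vectors on ground set `E`. -/
abbrev SignVec (E : Type*) := E → SignType

namespace SignVec

/-- The componentwise partial order on sign vectors generated by `0 < +` and `0 < -`. -/
def le {E : Type*} (X Y : SignVec E) : Prop := ∀ e, X e = 0 ∨ X e = Y e

/-- Composition of sign vectors. -/
def comp {E : Type*} (X Y : SignVec E) : SignVec E := fun e => if X e = 0 then Y e else X e

end SignVec

/-- The covector axioms for an oriented matroid given by its set of covectors. -/
structure IsOrientedMatroid {E : Type*} (L : Set (SignVec E)) : Prop where
  zero_mem : (0 : SignVec E) ∈ L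
  neg_mem : ∀ X ∈ L, (-X) ∈ L
  comp_mem : ∀ X ∈ L, ∀ Y ∈ L, SignVec.comp X Y ∈ L
  elim : ∀ X ∈ L, ∀ Y ∈ L, ∀ e, X e = -Y e → X e ≠ 0 →
    ∃ Z ∈ L, Z e = 0 ∧ ∀ f, ¬(X f = -Y f ∧ X f ≠ 0) → Z f = SignVec.comp X Y f

/-- The set of topes (maximal covectors) of `L`. -/
def Topes {E : Type*} (L : Set (SignVec E)) : Set (SignVec E) :=
  {T | T ∈ L ∧ ∀ X ∈ L, SignVec.le T X → X = T}

/-- `L` has no loops: every tope is nowhere zero. -/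
def Loopless {E : Type*} (L : Set (SignVec E)) : Prop :=
  ∀ T ∈ Topes L, ∀ e, T e ≠ 0

/-- The separator of two (co)vectors. -/
def sep {E : Type*} (P Q : SignVec E) : Set E := {e | P e = -Q e ∧ P e ≠ 0}

/-- The star of a covector: all topes above it. -/
def star {E : Type*} (L : Set (SignVec E)) (X : SignVec E) : Set (SignVec E) :=
  {T ∈ Topes L | SignVec.le X T}

/-- The closed interval `[Q,P]_R` in the tope poset with base tope `R`. -/
def intervalR {E : Type*} (L : Set (SignVec E)) (R Q P : SignVec E) : Set (SignVec E) :=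
  {T ∈ Topes L | sep R Q ⊆ sep R T ∧ sep R T ⊆ sep R P}

/-- The open interval `(0̂, P)_{R,e}` in `T_{R,e}`. -/
def openInt {E : Type*} (L : Set (SignVec E)) (R : SignVec E) (e : E) (P : SignVec E) :
    Set (SignVec E) :=
  {Q ∈ Topes L | Q e = -R e ∧ sep R Q ⊂ sep R P}

/-- The subposet `(0̂,P)^△_{R,e}` of `(0̂,P)_{R,e}`. -/
def openIntTri {E : Type*} (L : Set (SignVec E)) (R : SignVec E) (e : E) (P : SignVec E) :
    Set (SignVec E) :=
  {Q ∈ openInt L R e P | ∃ X ∈ L, intervalR L R Q P = star L X}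

/-- Ordering a set of topes by `P ⪯_R Q ↔ Sep(R,P) ⊆ Sep(R,Q)`. -/
def sepPreorder {E : Type*} (R : SignVec E) (S : Set (SignVec E)) : Preorder S where
  le P Q := sep R P.1 ⊆ sep R Q.1
  lt P Q := sep R P.1 ⊆ sep R Q.1 ∧ ¬ sep R Q.1 ⊆ sep R P.1
  le_refl _ := subset_rfl
  le_trans _ _ _ h₁ h₂ := fun _ hx => h₂ (h₁ hx)
  lt_iff_le_not_ge _ _ := Iff.rfl

/-- Ordering a set of covectors by the componentwise order on sign vectors. -/
def covPreorder {E : Type*} (S : Set (SignVec E)) : Preorder S where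
  le X Y := SignVec.le X.1 Y.1
  lt X Y := SignVec.le X.1 Y.1 ∧ ¬ SignVec.le Y.1 X.1
  le_refl _ := fun _ => Or.inr rfl
  le_trans X Y Z h₁ h₂ := fun e => by
    rcases h₁ e with h | h
    · exact Or.inl h
    · rcases h₂ e with h' | h'
      · exact Or.inl (h.trans h')
      · exact Or.inr (h.trans h')
  lt_iff_le_not_ge _ _ := Iff.rfl

open CategoryTheory in
/-- The geometric realization of the order complex of a poset, realized as the topological
realization of the nerve of the poset viewed as a category. -/
noncomputable def posetRealization (α : Type) [Preorder α] : TopCat :=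
  SSet.toTop.obj (nerve α)

/-- The monomial `∏_{e ∈ Sep(P,Q)} U_e`, the `(P,Q)` entry of the Varchenko matrix. -/
noncomputable def vchEntry {E : Type*} [Fintype E] (K : Type*) [Field K] (P Q : SignVec E) :
    MvPolynomial E K :=
  ∏ e ∈ Finset.univ.filter fun e => P e = -Q e ∧ P e ≠ 0, MvPolynomial.X e

/-- The Varchenko matrix of `L`, with rows and columns indexed by the topes of `L`. -/
noncomputable def varchenko {E : Type*} [Fintype E] (K : Type*) [Field K]
    (L : Set (SignVec E)) : Matrix ↥(Topes L) ↥(Topes L) (MvPolynomial E K) :=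
  Matrix.of fun P Q => vchEntry K P.1 Q.1

/-- `a(F) = ∏_{e : F_e = 0} U_e`. -/
noncomputable def aF {E : Type*} [Fintype E] (K : Type*) [Field K] (F : SignVec E) :
    MvPolynomial E K :=
  ∏ e ∈ Finset.univ.filter fun e => F e = 0, MvPolynomial.X e

/-- `T^{F,e}`: the topes `P` such that `F` is the greatest covector `G ∈ L` with
`G ≤ P` and `G e = 0`. -/
def TFe {E : Type*} (L : Set (SignVec E)) (F : SignVec E) (e : E) : Set (SignVec E) :=
  {P ∈ Topes L | F ∈ L ∧ SignVec.le F P ∧ F e = 0 ∧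
    ∀ G ∈ L, SignVec.le G P → G e = 0 → SignVec.le G F}

/-- The poset `W_{R,e}(P)`. -/
def Wset {E : Type*} (L : Set (SignVec E)) (R : SignVec E) (e : E) (P : SignVec E) :
    Set (SignVec E) :=
  {F ∈ L | F ≠ 0 ∧ SignVec.le F P ∧ F ≠ P ∧ F e = -R e ∧
    (∀ f, f ∉ sep P R → F f = P f) ∧ ∀ f ∈ sep P R, f ≠ e → F f = 0 ∨ F f = P f}

open scoped Classical in
/-- `μ` is, for every base tope `B` of `L`, the Möbius function `μ(0̂, ·)` of the poset
`T_{B,e}` (computed in its incidence algebra over `ℤ`): it satisfies the defining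
recursion `∑_{0̂ ≤ z ≤ Q} μ(0̂,z) = 0` for every `Q > 0̂`, where `μ(0̂,0̂) = 1`. -/
def IsMoebius {E : Type*} [Fintype E] (L : Set (SignVec E)) (e : E)
    (μ : SignVec E → SignVec E → ℤ) : Prop :=
  ∀ B ∈ Topes L, ∀ Q ∈ Topes L, Q e = -B e →
    1 + ∑ Q' ∈ Finset.univ.filter
      (fun Q' : SignVec E => Q' ∈ Topes L ∧ Q' e = -B e ∧ sep B Q' ⊆ sep B Q), μ Q' B = 0

/-- `L` is graded of rank `r`: every maximal chain of covectors (necessarily running from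
the zero covector to a tope) has length `r`, i.e. `r+1` elements. -/
def GradedOfRank {α : Type*} (L : Set (SignVec α)) (r : ℕ) : Prop :=
  ∀ c : Finset (SignVec α), ↑c ⊆ L → IsChain SignVec.le (c : Set (SignVec α)) →
    (0 : SignVec α) ∈ c → (∃ T ∈ c, T ∈ Topes L) →
    (∀ d : Finset (SignVec α), ↑d ⊆ L → IsChain SignVec.le (d : Set (SignVec α)) →
      c ⊆ d → c = d) →
    c.card = r + 1

/-- The restriction `L|_A` of `L` to a subset `A` of the ground set. -/
def restrictOM {E : Type*} (L : Set (SignVec E)) (A : Set E) : Set (SignVec ↥A) :=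
  (fun X (a : ↥A) => X a.1) '' L

/-- `e` is the maximal element of `Sep(P,Q)`. -/
def maxSep {E : Type*} [LinearOrder E] (e : E) (P Q : SignVec E) : Prop :=
  e ∈ sep P Q ∧ ∀ f ∈ sep P Q, f ≤ e

open scoped Classical in
/-- The `(Q,R)` entry of the matrix `𝓜^e`. -/
noncomputable def mEntry {E : Type*} [Fintype E] [LinearOrder E] (K : Type*) [Field K]
    (μ : SignVec E → SignVec E → ℤ) (e : E) (Q R : SignVec E) : MvPolynomial E K :=
  if Q = R then 1
  else if Q e = -1 ∧ R e = 1 ∧ maxSep e Q R then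
    ((-μ Q R : ℤ) : MvPolynomial E K) * vchEntry K Q R
  else if Q e = 1 ∧ R e = -1 ∧ maxSep e Q R then
    ((-μ (-Q) (-R) : ℤ) : MvPolynomial E K) * vchEntry K Q R
  else 0

/-- Restriction of a sign vector to the complement of a single element. -/
def restr {E : Type*} (f : E) (X : SignVec E) : SignVec {g : E // g ≠ f} :=
  fun g => X g.1

/-- The deletion `L ∖ f` of an element of the ground set. -/
def deletion {E : Type*} (L : Set (SignVec E)) (f : E) : Set (SignVec {g : E // g ≠ f}) :=
  restr f '' L

/-!
Every tope `Q` of `L ∖ f` is nowhere zero: it is the restriction of a covector `X`, and the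
restriction of `X ∘ R` lies above it, hence equals it. For nowhere-zero sign vectors, being below
`Q` in the tope poset based at the all-positive tope just says that `T` is `+` wherever `Q` is;
on `Sp` this is already forced by `Q` because `f ∉ Sp`.
-/

namespace SignVec

variable {E : Type*}

theorem le_comp (X Y : SignVec E) : le X (comp X Y) := fun e => by
  by_cases h : X e = 0
  · exact Or.inl h
  · exact Or.inr (by simp [comp, h])

theorem comp_ne_zero (X : SignVec E) {Y : SignVec E} (hY : ∀ e, Y e ≠ 0) (e : E) :
    comp X Y e ≠ 0 := by
  by_cases h : X e = 0 <;> simp [comp, h, hY e]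

end SignVec

section Topes

variable {E : Type*} {L : Set (SignVec E)}

theorem ne_zero_of_mem_topes (hcomp : ∀ X ∈ L, ∀ Y ∈ L, SignVec.comp X Y ∈ L)
    {R : SignVec E} (hR : R ∈ L) (hRne : ∀ e, R e ≠ 0) {T : SignVec E} (hT : T ∈ Topes L)
    (e : E) : T e ≠ 0 := by
  rw [← hT.2 _ (hcomp T hT.1 R hR) (SignVec.le_comp T R)]
  exact SignVec.comp_ne_zero T hRne e

theorem comp_mem_deletion (hcomp : ∀ X ∈ L, ∀ Y ∈ L, SignVec.comp X Y ∈ L) (f : E) :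
    ∀ X ∈ deletion L f, ∀ Y ∈ deletion L f, SignVec.comp X Y ∈ deletion L f := by
  rintro _ ⟨X, hX, rfl⟩ _ ⟨Y, hY, rfl⟩
  exact ⟨SignVec.comp X Y, hcomp X hX Y hY, rfl⟩

theorem restr_mem_topes_deletion (hloop : Loopless L) (f : E) {T : SignVec E}
    (hT : T ∈ Topes L) : restr f T ∈ Topes (deletion L f) := by
  refine ⟨⟨T, hT.1, rfl⟩, fun X _ hle => funext fun g => ?_⟩
  exact ((hle g).resolve_left (hloop T hT g.1)).symm

end Topes

theorem mem_sep_one_iff {E : Type*} (X : SignVec E) (g : E) :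
    g ∈ sep (fun _ => 1) X ↔ X g = -1 := by
  cases h : X g <;> simp [sep, h]

theorem sep_one_subset_sep_one_iff {E : Type*} {X Y : SignVec E} (hX : ∀ e, X e ≠ 0)
    (hY : ∀ e, Y e ≠ 0) : sep (fun _ => 1) X ⊆ sep (fun _ => 1) Y ↔ ∀ g, Y g = 1 → X g = 1 := by
  simp only [Set.subset_def, mem_sep_one_iff]
  constructor
  · intro h g hYg
    cases hXg : X g
    · exact absurd hXg (hX g)
    · simp [h g hXg] at hYg
    · rfl
  · intro h g hXg
    cases hYg : Y g
    · exact absurd hYg (hY g)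
    · rfl
    · simp [h g hYg] at hXg

theorem fiber_of_deletion_is_supertope_general {E : Type*} (L : Set (SignVec E))
    (hOM : IsOrientedMatroid L) (hloop : Loopless L)
    (hR : (fun _ => 1 : SignVec E) ∈ Topes L)
    (Sp Sm : Set E) (f : E) (hf : f ∉ Sp ∪ Sm) :
    (∀ T ∈ Topes L, restr f T ∈ Topes (deletion L f)) ∧
    (∀ T ∈ Topes L, (∀ g ∈ Sp, T g = 1) → (∀ g ∈ Sm, T g = -1) →
      restr f T ∈ Topes (deletion L f) ∧
      (∀ g : {g : E // g ≠ f}, g.1 ∈ Sp → restr f T g = 1) ∧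
      (∀ g : {g : E // g ≠ f}, g.1 ∈ Sm → restr f T g = -1)) ∧
    ∀ Q ∈ Topes (deletion L f),
      (∀ g : {g : E // g ≠ f}, g.1 ∈ Sp → Q g = 1) →
      (∀ g : {g : E // g ≠ f}, g.1 ∈ Sm → Q g = -1) →
      {T | T ∈ Topes L ∧ (∀ g ∈ Sp, T g = 1) ∧ (∀ g ∈ Sm, T g = -1) ∧
          sep (restr f (fun _ => 1)) (restr f T) ⊆ sep (restr f (fun _ => 1)) Q} =
      {T | T ∈ Topes L ∧ (∀ g : {g : E // g ≠ f}, Q g = 1 → T g.1 = 1) ∧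
          ∀ g ∈ Sm, T g = -1} := by
  have hres := fun T (hT : T ∈ Topes L) => restr_mem_topes_deletion hloop f hT
  refine ⟨hres, fun T hT hp hm => ⟨hres T hT, fun g hg => hp g hg, fun g hg => hm g hg⟩,
    fun Q hQ hQp _ => Set.ext fun T => ?_⟩
  have hQne : ∀ g, Q g ≠ 0 := ne_zero_of_mem_topes (comp_mem_deletion hOM.comp_mem f)
    ⟨_, hR.1, rfl⟩ (fun _ => one_ne_zero) hQ
  have hSp_ne : ∀ g ∈ Sp, g ≠ f := fun g hg hgf => hf (hgf ▸ Or.inl hg)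
  have hsep_iff : ∀ T ∈ Topes L, sep (restr f (fun _ => 1)) (restr f T) ⊆
      sep (restr f (fun _ => 1)) Q ↔ ∀ g, Q g = 1 → T g.1 = 1 := fun T hT =>
    sep_one_subset_sep_one_iff (X := restr f T) (fun g => hloop T hT g.1) hQne
  constructor
  · rintro ⟨hT, -, hm, hsub⟩
    exact ⟨hT, (hsep_iff T hT).1 hsub, hm⟩
  · rintro ⟨hT, hTQ, hm⟩
    exact ⟨hT, fun g hg => hTQ ⟨g, hSp_ne g hg⟩ (hQp ⟨g, hSp_ne g hg⟩ hg), hm,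
      (hsep_iff T hT).2 hTQ⟩

/-- Lemma 4.1: fibers of the restriction map between supertopes. -/
theorem fiber_of_deletion_is_supertope {E : Type*} [Fintype E] (L : Set (SignVec E))
    (hOM : IsOrientedMatroid L) (hloop : Loopless L)
    (hR : (fun _ => 1 : SignVec E) ∈ Topes L)
    (Sp Sm : Set E) (hdisj : Disjoint Sp Sm) (hne : (Sp ∪ Sm).Nonempty)
    (hne' : Sp ∪ Sm ≠ Set.univ) (f : E) (hf : f ∉ Sp ∪ Sm) :
    (∀ T ∈ Topes L, restr f T ∈ Topes (deletion L f)) ∧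
    (∀ T ∈ Topes L, (∀ g ∈ Sp, T g = 1) → (∀ g ∈ Sm, T g = -1) →
      restr f T ∈ Topes (deletion L f) ∧
      (∀ g : {g : E // g ≠ f}, g.1 ∈ Sp → restr f T g = 1) ∧
      (∀ g : {g : E // g ≠ f}, g.1 ∈ Sm → restr f T g = -1)) ∧
    ∀ Q ∈ Topes (deletion L f),
      (∀ g : {g : E // g ≠ f}, g.1 ∈ Sp → Q g = 1) →
      (∀ g : {g : E // g ≠ f}, g.1 ∈ Sm → Q g = -1) →
      {T | T ∈ Topes L ∧ (∀ g ∈ Sp, T g = 1) ∧ (∀ g ∈ Sm, T g = -1) ∧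
          sep (restr f (fun _ => 1)) (restr f T) ⊆ sep (restr f (fun _ => 1)) Q} =
      {T | T ∈ Topes L ∧ (∀ g : {g : E // g ≠ f}, Q g = 1 → T g.1 = 1) ∧
          ∀ g ∈ Sm, T g = -1} :=
  fiber_of_deletion_is_supertope_general L hOM hloop hR Sp Sm f hf
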